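/- For every even integer k ≥ 2 and every τ in the complex upper half-plane ℍ, one has F̄_k(τ + 1) = Ē_k(τ), i.e. 2^{−(k−1)} F_k((τ+1)/2) − F_k(τ+1) = 2^{−(k−1)} E_k(τ/2) − E_k(τ). -/

import Mathlib

/-! With `x = e^{πiτ}`, each Eisenstein value in the statement is
`G(q) = -B_k/k! + (2/(k-1)!) S(q)`, `S(q) = ∑ σ_j(n) qⁿ`, `j = k - 1`, at one of `q = x, -x, x², x⁴`
(using `e^{πi} = -1` and `e^{2πi} = 1`). The constant terms cancel, and what remains is
`S(x) + S(-x) = 2((1 + 2^j) S(x²) - 2^j S(x⁴))`. The left side keeps only the even-index terms,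
so this is the Hecke relation `σ_j(2n) = (1 + 2^j) σ_j(n) - 2^j σ_j(n/2)`, obtained by sorting the
divisors of `2n` by parity. -/

open Complex Real

/-- The Eisenstein series
`E_k(τ) = -B_k/k! + (2/(k-1)!) ∑_{n ≥ 1} σ_{k-1}(n) e^{2πinτ}`,
where `B_k` is the k-th Bernoulli number and `σ_{k-1}` the divisor sum. -/
noncomputable def Eis (k : ℕ) (τ : ℂ) : ℂ :=
  -((bernoulli k : ℚ) : ℂ) / (Nat.factorial k : ℂ) +
    2 / (Nat.factorial (k - 1) : ℂ) *
      ∑' n : ℕ, ((∑ d ∈ (n + 1).divisors, d ^ (k - 1) : ℕ) : ℂ) *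
        Complex.exp (2 * (π : ℂ) * Complex.I * ((n : ℂ) + 1) * τ)

/-- The level-2 Eisenstein series `F_k(τ) = 2 E_k(2τ) - E_k(τ)`. -/
noncomputable def Fis (k : ℕ) (τ : ℂ) : ℂ := 2 * Eis k (2 * τ) - Eis k τ

/-- `Ē_k(τ) = 2^{-(k-1)} E_k(τ/2) - E_k(τ)`. -/
noncomputable def Ebar (k : ℕ) (τ : ℂ) : ℂ :=
  (2 : ℂ) ^ (-((k : ℤ) - 1)) * Eis k (τ / 2) - Eis k τ

/-- `F̄_k(τ) = 2^{-(k-1)} F_k(τ/2) - F_k(τ)`. -/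
noncomputable def Fbar (k : ℕ) (τ : ℂ) : ℂ :=
  (2 : ℂ) ^ (-((k : ℤ) - 1)) * Fis k (τ / 2) - Fis k τ

open scoped ArithmeticFunction.sigma
open ArithmeticFunction Nat

lemma Nat.filter_not_dvd_divisors_prime_mul {p : ℕ} (hp : p.Prime) (n : ℕ) :
    {d ∈ (p * n).divisors | ¬p ∣ d} = {d ∈ n.divisors | ¬p ∣ d} := by
  ext d
  simp only [Finset.mem_filter, Nat.mem_divisors, mul_ne_zero_iff, ne_eq, hp.ne_zero,
    not_false_eq_true, true_and]
  refine ⟨fun ⟨⟨hd, hn⟩, hpd⟩ ↦ ⟨⟨?_, hn⟩, hpd⟩, fun ⟨⟨hd, hn⟩, hpd⟩ ↦ ⟨⟨hd.mul_left p, hn⟩, hpd⟩⟩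
  exact ((hp.coprime_iff_not_dvd.2 hpd).symm).dvd_of_dvd_mul_left hd

lemma Nat.filter_dvd_divisors_mul {p : ℕ} (hp : p ≠ 0) (n : ℕ) :
    {d ∈ (p * n).divisors | p ∣ d} = n.divisors.map ⟨(p * ·), mul_right_injective₀ hp⟩ := by
  ext d
  simp only [Finset.mem_filter, Nat.mem_divisors, Finset.mem_map, Function.Embedding.coeFn_mk,
    mul_ne_zero_iff, hp, ne_eq, not_false_eq_true, true_and]
  constructor
  · rintro ⟨⟨hd, hn⟩, e, rfl⟩
    exact ⟨e, ⟨Nat.dvd_of_mul_dvd_mul_left (Nat.pos_of_ne_zero hp) hd, hn⟩, rfl⟩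
  · rintro ⟨e, ⟨he, hn⟩, rfl⟩
    exact ⟨⟨mul_dvd_mul_left p he, hn⟩, dvd_mul_right p e⟩

lemma ArithmeticFunction.sigma_eq_sum_not_dvd_add {p : ℕ} (hp : p.Prime) (j n : ℕ) :
    σ j n = ∑ d ∈ n.divisors with ¬p ∣ d, d ^ j + p ^ j * (if p ∣ n then σ j (n / p) else 0) := by
  rw [sigma_apply, ← Finset.sum_filter_not_add_sum_filter _ (p ∣ ·)]
  congr 1
  split_ifs with hpn
  · obtain ⟨m, rfl⟩ := hpn
    rw [Nat.filter_dvd_divisors_mul hp.ne_zero, Finset.sum_map, Nat.mul_div_cancel_left _ hp.pos,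
      sigma_apply, Finset.mul_sum]
    simp only [Function.Embedding.coeFn_mk, mul_pow]
  · rw [Finset.filter_false_of_mem fun d hd hpd ↦ hpn (hpd.trans (Nat.dvd_of_mem_divisors hd))]
    simp

theorem ArithmeticFunction.sigma_prime_mul_add {p : ℕ} (hp : p.Prime) (j n : ℕ) :
    σ j (p * n) + p ^ j * (if p ∣ n then σ j (n / p) else 0) = (1 + p ^ j) * σ j n := by
  have hpn := sigma_eq_sum_not_dvd_add hp j (p * n)
  rw [if_pos (dvd_mul_right p n), Nat.mul_div_cancel_left _ hp.pos,
    Nat.filter_not_dvd_divisors_prime_mul hp] at hpn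
  rw [hpn, sigma_eq_sum_not_dvd_add hp j n]
  ring

theorem hasSum_ite_dvd_mul_pow {R : Type*} [CommSemiring R] [TopologicalSpace R] {p : ℕ}
    (hp : p ≠ 0) {a : ℕ → R} {y s : R} (h : HasSum (fun n ↦ a n * (y ^ p) ^ n) s) :
    HasSum (fun n ↦ (if p ∣ n then a (n / p) else 0) * y ^ n) s := by
  rw [← (mul_right_injective₀ hp).hasSum_iff]
  · simpa [Function.comp_def, Nat.mul_div_cancel_left _ (Nat.pos_of_ne_zero hp), pow_mul] using h
  · rintro n hn
    rw [if_neg fun ⟨m, hm⟩ ↦ hn ⟨m, hm.symm⟩, zero_mul]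

theorem hasSum_two_mul_even_mul_pow {R : Type*} [CommRing R] [TopologicalSpace R] [ContinuousAdd R]
    {a : ℕ → R} {x s t : R} (hs : HasSum (fun n ↦ a n * x ^ n) s)
    (ht : HasSum (fun n ↦ a n * (-x) ^ n) t) :
    HasSum (fun n ↦ 2 * a (2 * n) * (x ^ 2) ^ n) (s + t) := by
  have hst := hs.add ht
  rw [← (mul_right_injective₀ two_ne_zero).hasSum_iff] at hst
  · convert hst using 2 with n
    simp only [Function.comp_apply, Even.neg_pow (even_two_mul n), pow_mul]
    ring
  · intro n hn
    have hodd : Odd n := Nat.not_even_iff_odd.1 fun ⟨m, hm⟩ ↦ hn ⟨m, by simp [hm, two_mul]⟩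
    simp [hodd.neg_pow]

lemma summable_sigma_mul_pow (j : ℕ) {z : ℂ} (hz : ‖z‖ < 1) :
    Summable fun n ↦ (σ j n : ℂ) * z ^ n := by
  refine .of_norm_bounded (summable_norm_pow_mul_geometric_of_norm_lt_one (j + 1) hz) fun n ↦ ?_
  simp only [norm_mul, Complex.norm_natCast, norm_pow]
  gcongr
  exact_mod_cast sigma_le_pow_succ j n

noncomputable def sigmaSeries (j : ℕ) (z : ℂ) : ℂ := ∑' n, (σ j n : ℂ) * z ^ n

lemma hasSum_sigmaSeries (j : ℕ) {z : ℂ} (hz : ‖z‖ < 1) :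
    HasSum (fun n ↦ (σ j n : ℂ) * z ^ n) (sigmaSeries j z) :=
  (summable_sigma_mul_pow j hz).hasSum

theorem sigmaSeries_add_sigmaSeries_neg (j : ℕ) {x : ℂ} (hx : ‖x‖ < 1) :
    sigmaSeries j x + sigmaSeries j (-x) =
      2 * ((1 + 2 ^ j) * sigmaSeries j (x ^ 2) - 2 ^ j * sigmaSeries j (x ^ 4)) := by
  have hx2 : ‖x ^ 2‖ < 1 := by rw [norm_pow]; exact pow_lt_one₀ (norm_nonneg x) hx two_ne_zero
  have hx4 : ‖(x ^ 2) ^ 2‖ < 1 := by rw [norm_pow]; exact pow_lt_one₀ (norm_nonneg _) hx2 two_ne_zero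
  have hdilate := hasSum_ite_dvd_mul_pow two_ne_zero (hasSum_sigmaSeries j hx4)
  refine (hasSum_two_mul_even_mul_pow (hasSum_sigmaSeries j hx)
    (hasSum_sigmaSeries j (by rwa [norm_neg]))).unique ?_
  rw [show x ^ 4 = (x ^ 2) ^ 2 by ring, mul_sub, ← mul_assoc, ← mul_assoc]
  refine (((hasSum_sigmaSeries j hx2).mul_left _).sub (hdilate.mul_left (2 * 2 ^ j))).congr_fun
    fun n ↦ ?_
  have hecke : ((σ j (2 * n) + 2 ^ j * (if 2 ∣ n then σ j (n / 2) else 0) : ℕ) : ℂ) =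
      ((1 + 2 ^ j) * σ j n : ℕ) := congrArg _ (sigma_prime_mul_add prime_two j n)
  push_cast [Nat.cast_ite] at hecke
  linear_combination 2 * (x ^ 2) ^ n * hecke

noncomputable def qEis (k : ℕ) (q : ℂ) : ℂ :=
  -((bernoulli k : ℚ) : ℂ) / (k ! : ℂ) + 2 / ((k - 1)! : ℂ) * sigmaSeries (k - 1) q

lemma Eis_eq_qEis (k : ℕ) (τ : ℂ) : Eis k τ = qEis k (cexp (2 * π * I * τ)) := by
  rw [Eis, qEis, sigmaSeries,
    ← (add_left_injective 1).tsum_eq (f := fun n ↦ (σ (k - 1) n : ℂ) * cexp (2 * π * I * τ) ^ n)]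
  · congr 2
    refine tsum_congr fun n ↦ ?_
    rw [sigma_apply, ← Complex.exp_nat_mul]
    push_cast
    ring_nf
  · intro n hn
    cases n with
    | zero => simp at hn
    | succ m => exact ⟨m, rfl⟩

theorem qEis_translation {k : ℕ} (hk : 1 ≤ k) {x : ℂ} (hx : ‖x‖ < 1) :
    (2 : ℂ) ^ (-((k : ℤ) - 1)) * (2 * qEis k (x ^ 2) - qEis k (-x)) -
        (2 * qEis k (x ^ 4) - qEis k (x ^ 2)) =
      (2 : ℂ) ^ (-((k : ℤ) - 1)) * qEis k x - qEis k (x ^ 2) := by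
  have hinv : (2 : ℂ) ^ (-((k : ℤ) - 1)) * 2 ^ (k - 1) = 1 := by
    rw [show (k : ℤ) - 1 = ((k - 1 : ℕ) : ℤ) by omega, zpow_neg, zpow_natCast]
    exact inv_mul_cancel₀ (pow_ne_zero _ two_ne_zero)
  simp only [qEis]
  linear_combination (-(2 : ℂ) ^ (-((k : ℤ) - 1)) * (2 / ((k - 1)! : ℂ))) *
    sigmaSeries_add_sigmaSeries_neg (k - 1) hx +
    2 * (2 / ((k - 1)! : ℂ)) * (sigmaSeries (k - 1) (x ^ 4) - sigmaSeries (k - 1) (x ^ 2)) * hinv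

theorem Fbar_translation_general (k : ℕ) (hk : 2 ≤ k) (τ : UpperHalfPlane) :
    Fbar k ((τ : ℂ) + 1) = Ebar k (τ : ℂ) := by
  set x := cexp (π * I * τ)
  have hx : ‖x‖ < 1 := by
    rw [Complex.norm_exp, Real.exp_lt_one_iff]
    simpa using mul_pos pi_pos τ.im_pos
  have hhalf : cexp (2 * π * I * (τ / 2)) = x := by rw [show 2 * π * I * (τ / 2) = π * I * τ by ring]
  have hτ : cexp (2 * π * I * τ) = x ^ 2 := by
    rw [show 2 * π * I * τ = (2 : ℕ) * (π * I * τ) by push_cast; ring, Complex.exp_nat_mul]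
  have hτ1 : cexp (2 * π * I * (τ + 1)) = x ^ 2 := by
    rw [mul_add, mul_one, Complex.exp_add, Complex.exp_two_pi_mul_I, mul_one, hτ]
  have hhalf1 : cexp (2 * π * I * ((τ + 1) / 2)) = -x := by
    rw [show 2 * π * I * ((τ + 1) / 2) = π * I * τ + π * I by ring, Complex.exp_add,
      Complex.exp_pi_mul_I, mul_neg_one]
  have htwo1 : cexp (2 * π * I * (2 * (τ + 1))) = x ^ 4 := by
    rw [show 2 * π * I * (2 * (τ + 1)) = (2 : ℕ) * (2 * π * I * (τ + 1)) by push_cast; ring,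
      Complex.exp_nat_mul, hτ1, ← pow_mul]
  simp only [Fbar, Fis, Ebar, Eis_eq_qEis, mul_div_cancel₀ _ (two_ne_zero' ℂ), hhalf, hτ, hτ1,
    hhalf1, htwo1]
  exact qEis_translation (by omega) hx

theorem Fbar_translation (k : ℕ) (hk : 2 ≤ k) (hke : Even k) (τ : UpperHalfPlane) :
    Fbar k ((τ : ℂ) + 1) = Ebar k (τ : ℂ) :=
  Fbar_translation_general k hk τ
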